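/- arXiv:2105.05283 — 2 statements merged into one kernel-verified Lean document; each statement's English description precedes it below -/
import Mathlib

section
/- Fix θ > 0. Define g_θ(z) = (Σ_{n=0}^∞ 1/(n+θ-z)²) / (Σ_{n=0}^∞ 1/(n+z)²) for z ∈ (0,θ). Then g_θ is a strictly increasing continuous bijection from (0,θ) onto (0,∞), and its inverse g_θ^{-1} satisfies g_θ^{-1}(1) = θ/2 and g_θ^{-1}(1/x) = θ - g_θ^{-1}(x) for all x > 0. -/
/-!
Writing `Ψ'(w) = ∑ₙ 1/(n+w)²`, we have `g_θ(z) = Ψ'(θ - z) / Ψ'(z)`. On `(0,∞)` the series `Ψ'` is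
positive, continuous and strictly decreasing, so `g_θ` is strictly increasing and continuous, and
`g_θ(θ - z) = 1/g_θ(z)`. Since `Ψ'(z) ≥ 1/z²` blows up as `z → 0⁺`, `g_θ(z) → 0` there, hence by the
symmetry `g_θ(θ - z) → ∞`; the intermediate value theorem gives surjectivity onto `(0,∞)`.
-/

open Real Set

/-- The function `g_θ(z) = (Σ_{n≥0} 1/(n+θ-z)²)/(Σ_{n≥0} 1/(n+z)²)`. -/
noncomputable def gFun (θ z : ℝ) : ℝ :=
  (∑' n : ℕ, 1 / ((n : ℝ) + θ - z) ^ 2) / (∑' n : ℕ, 1 / ((n : ℝ) + z) ^ 2)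

open Filter Topology

noncomputable def trigamma (w : ℝ) : ℝ := ∑' n : ℕ, 1 / ((n : ℝ) + w) ^ 2

lemma summable_one_div_nat_add_sq (w : ℝ) : Summable fun n : ℕ ↦ 1 / ((n : ℝ) + w) ^ 2 := by
  simpa [Real.rpow_two, sq_abs] using (Real.summable_one_div_nat_add_rpow w 2).2 one_lt_two

lemma one_div_sq_le_trigamma {w : ℝ} (hw : 0 < w) : 1 / w ^ 2 ≤ trigamma w := by
  simpa [trigamma] using (summable_one_div_nat_add_sq w).le_tsum 0 fun n _ ↦ by positivity

lemma trigamma_pos {w : ℝ} (hw : 0 < w) : 0 < trigamma w :=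
  (by positivity : (0 : ℝ) < 1 / w ^ 2).trans_le (one_div_sq_le_trigamma hw)

lemma strictAntiOn_trigamma : StrictAntiOn trigamma (Ioi 0) := by
  intro a (ha : 0 < a) b _ hab
  refine (summable_one_div_nat_add_sq b).tsum_lt_tsum (i := 0) (fun n ↦ ?_) ?_
    (summable_one_div_nat_add_sq a)
  · have : 0 < (n : ℝ) + a := by positivity
    gcongr
  · simpa using one_div_lt_one_div_of_lt (by positivity) (pow_lt_pow_left₀ hab ha.le two_ne_zero)

lemma continuousOn_trigamma : ContinuousOn trigamma (Ioi 0) := by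
  refine continuousOn_of_forall_continuousAt fun w (hw : 0 < w) ↦ ?_
  have hIci : ContinuousOn trigamma (Ici (w / 2)) := by
    refine continuousOn_tsum (fun n ↦ ?_) (summable_one_div_nat_add_sq (w / 2)) fun n x hx ↦ ?_
    · refine continuousOn_const.div (by fun_prop) fun x (hx : w / 2 ≤ x) ↦ ?_
      have : 0 < x := by linarith
      positivity
    · have hx : w / 2 ≤ x := hx
      rw [Real.norm_of_nonneg (by positivity)]
      gcongr
  exact hIci.continuousAt (Ici_mem_nhds (by linarith))

lemma tendsto_trigamma_nhdsGT_zero : Tendsto trigamma (𝓝[>] 0) atTop := by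
  have h : Tendsto (fun w : ℝ ↦ 1 / w ^ 2) (𝓝[>] 0) atTop := by
    simpa [Function.comp_def, one_div, inv_pow] using
      (tendsto_pow_atTop two_ne_zero).comp (tendsto_inv_nhdsGT_zero (𝕜 := ℝ))
  exact tendsto_atTop_mono' _ (eventually_nhdsWithin_of_forall fun w (hw : 0 < w) ↦
    one_div_sq_le_trigamma hw) h

lemma gFun_eq_div (θ z : ℝ) : gFun θ z = trigamma (θ - z) / trigamma z := by
  simp only [gFun, trigamma, add_sub_assoc]

lemma gFun_sub_eq_inv (θ z : ℝ) : gFun θ (θ - z) = (gFun θ z)⁻¹ := by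
  rw [gFun_eq_div, gFun_eq_div, sub_sub_cancel, inv_div]

lemma gFun_half {θ : ℝ} (hθ : 0 < θ) : gFun θ (θ / 2) = 1 := by
  rw [gFun_eq_div, sub_half, div_self (trigamma_pos (half_pos hθ)).ne']

lemma gFun_pos {θ z : ℝ} (hz : z ∈ Ioo 0 θ) : 0 < gFun θ z := by
  rw [gFun_eq_div]
  exact div_pos (trigamma_pos (sub_pos.2 hz.2)) (trigamma_pos hz.1)

lemma strictMonoOn_gFun (θ : ℝ) : StrictMonoOn (gFun θ) (Ioo 0 θ) := by
  intro a ha b hb hab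
  rw [gFun_eq_div, gFun_eq_div]
  have hnum : trigamma (θ - a) < trigamma (θ - b) :=
    strictAntiOn_trigamma (sub_pos.2 hb.2) (sub_pos.2 ha.2) (by linarith)
  have hden : trigamma b < trigamma a := strictAntiOn_trigamma ha.1 hb.1 hab
  exact div_lt_div₀ hnum hden.le (trigamma_pos (sub_pos.2 hb.2)).le (trigamma_pos hb.1)

lemma continuousOn_gFun (θ : ℝ) : ContinuousOn (gFun θ) (Ioo 0 θ) := by
  rw [funext (gFun_eq_div θ)]
  refine ContinuousOn.div ?_ (continuousOn_trigamma.mono fun z hz ↦ hz.1)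
    fun z hz ↦ (trigamma_pos hz.1).ne'
  exact continuousOn_trigamma.comp (by fun_prop) fun z hz ↦ sub_pos.2 hz.2

lemma tendsto_gFun_nhdsGT_zero {θ : ℝ} (hθ : 0 < θ) : Tendsto (gFun θ) (𝓝[>] 0) (𝓝 0) := by
  have hnum : Tendsto (fun z ↦ trigamma (θ - z)) (𝓝[>] 0) (𝓝 (trigamma θ)) := by
    have : Tendsto (fun z : ℝ ↦ θ - z) (𝓝 0) (𝓝 θ) := by
      simpa using (continuous_sub_left θ).tendsto 0
    exact ((continuousOn_trigamma.continuousAt (Ioi_mem_nhds hθ)).tendsto.comp this).mono_left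
      nhdsWithin_le_nhds
  simpa [funext (gFun_eq_div θ), div_eq_mul_inv] using
    hnum.mul (tendsto_inv_atTop_zero.comp tendsto_trigamma_nhdsGT_zero)

lemma surjOn_gFun {θ : ℝ} (hθ : 0 < θ) : SurjOn (gFun θ) (Ioo 0 θ) (Ioi 0) := by
  intro y (hy : 0 < y)
  obtain ⟨z, hgz, hz⟩ : ∃ z, gFun θ z < min y y⁻¹ ∧ z ∈ Ioo 0 (θ / 2) :=
    ((tendsto_gFun_nhdsGT_zero hθ).eventually (gt_mem_nhds (by positivity))).and
      (Ioo_mem_nhdsGT (half_pos hθ)) |>.exists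
  have hz' : z ∈ Ioo 0 θ := ⟨hz.1, by linarith [hz.2]⟩
  have hlow : gFun θ z ≤ y := (hgz.trans_le (min_le_left _ _)).le
  have hhigh : y ≤ gFun θ (θ - z) := by
    rw [gFun_sub_eq_inv]
    exact (le_inv_comm₀ (gFun_pos hz') hy).1 (hgz.trans_le (min_le_right _ _)).le
  have hsub : Icc z (θ - z) ⊆ Ioo 0 θ := fun c hc ↦ ⟨hz.1.trans_le hc.1, by linarith [hc.2, hz.1]⟩
  obtain ⟨c, hc, rfl⟩ := intermediate_value_Icc (by linarith [hz.2])
    ((continuousOn_gFun θ).mono hsub) ⟨hlow, hhigh⟩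
  exact ⟨c, hsub hc, rfl⟩

/-- For `θ > 0`, `g_θ` is a strictly increasing continuous bijection from `(0,θ)` onto
`(0,∞)`; its inverse satisfies `g_θ⁻¹(1) = θ/2` (i.e. `g_θ(θ/2) = 1`) and
`g_θ⁻¹(1/x) = θ - g_θ⁻¹(x)` (i.e. if `g_θ(z) = x` then `g_θ(θ - z) = x⁻¹`). -/
theorem gFun_bijection (θ : ℝ) (hθ : 0 < θ) :
    StrictMonoOn (gFun θ) (Set.Ioo 0 θ) ∧
    ContinuousOn (gFun θ) (Set.Ioo 0 θ) ∧
    Set.BijOn (gFun θ) (Set.Ioo 0 θ) (Set.Ioi 0) ∧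
    gFun θ (θ / 2) = 1 ∧
    ∀ x ∈ Set.Ioi (0 : ℝ), ∀ z ∈ Set.Ioo 0 θ, gFun θ z = x → gFun θ (θ - z) = x⁻¹ := by
  refine ⟨strictMonoOn_gFun θ, continuousOn_gFun θ,
    ⟨fun z hz ↦ gFun_pos hz, (strictMonoOn_gFun θ).injOn, surjOn_gFun hθ⟩, gFun_half hθ, ?_⟩
  rintro x - z - rfl
  exact gFun_sub_eq_inv θ z
end

section
/- Suppose F(x) and G_N(x) are cumulative distribution functions, f_M(z) = exp(-e^{σ M^{1/3} z}) with σ > 0, and X is a random variable with CDF G. If for x ∈ ℝ and x^± = x ± M^{-1/3}(log M)² we have |E[f_M(X - x^-)] - F(x^-)| ≤ M^{-ε} and |E[f_M(X - x^+)] - F(x^+)| ≤ M^{-ε}, then G(x) ≥ F(x^-) - M^{-ε} - e^{-e^{σ(log M)²}} and 1 - G(x) ≥ 1 - F(x^+) - M^{-ε} - (1 - e^{-e^{-σ(log M)²}}); i.e. F(x^-) - 2M^{-ε} ≤ G(x) ≤ F(x^+) + 2M^{-ε} provided e^{-e^{σ(log M)²}} ≤ M^{-ε} and 1 - e^{-e^{-σ(log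 M)²}} ≤ M^{-ε}. -/
open Real MeasureTheory

/-!
The double exponential `z ↦ exp (-exp (a z))` is a smoothed indicator of `z ≤ 0`: it is
antitone with values in `[0, 1]`, and once shifted by `δ` it stays within `exp (-exp (a δ))`
of the indicator from below and within `1 - exp (-exp (-a δ))` from above. Integrating these
pointwise comparisons against the law of `X` moves `E[f_M(X - x^±)]`, hence `F(x^±)`, to within
those errors of `P(X ≤ x)`; here `a δ = σ (log M)²`.
-/

section DoubleExponential

variable {a : ℝ}

lemma exp_neg_exp_mul_le_one (a z : ℝ) : exp (-exp (a * z)) ≤ 1 :=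
  exp_le_one_iff.mpr (neg_nonpos.mpr (exp_pos _).le)

lemma antitone_exp_neg_exp_mul (ha : 0 ≤ a) : Antitone fun z => exp (-exp (a * z)) :=
  fun _ _ hzw => exp_le_exp.mpr <| neg_le_neg <| exp_le_exp.mpr <|
    mul_le_mul_of_nonneg_left hzw ha

lemma exp_neg_exp_le_indicator_Iic_add (ha : 0 ≤ a) (x δ y : ℝ) :
    exp (-exp (a * (y - (x - δ)))) ≤ (Set.Iic x).indicator 1 y + exp (-exp (a * δ)) := by
  by_cases hy : y ≤ x
  · rw [Set.indicator_of_mem (Set.mem_Iic.mpr hy), Pi.one_apply]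
    linarith [exp_neg_exp_mul_le_one a (y - (x - δ)), (exp_pos (-exp (a * δ))).le]
  · rw [Set.indicator_of_notMem (by simpa using hy), zero_add]
    exact antitone_exp_neg_exp_mul ha (by linarith [not_le.mp hy])

lemma indicator_Iic_le_exp_neg_exp_add (ha : 0 ≤ a) (x δ y : ℝ) :
    (Set.Iic x).indicator 1 y ≤
      exp (-exp (a * (y - (x + δ)))) + (1 - exp (-exp (a * -δ))) := by
  by_cases hy : y ≤ x
  · rw [Set.indicator_of_mem (Set.mem_Iic.mpr hy), Pi.one_apply]
    linarith [antitone_exp_neg_exp_mul ha (show y - (x + δ) ≤ -δ by linarith)]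
  · rw [Set.indicator_of_notMem (by simpa using hy)]
    linarith [(exp_pos (-exp (a * (y - (x + δ))))).le, exp_neg_exp_mul_le_one a (-δ)]

end DoubleExponential

section Integration

variable {Ω α : Type*} [MeasurableSpace Ω] [MeasurableSpace α] {μ : Measure Ω}

lemma integrable_exp_neg_exp_mul_sub [IsFiniteMeasure μ] {X : Ω → ℝ} (hX : Measurable X)
    (a c : ℝ) : Integrable (fun ω => exp (-exp (a * (X ω - c)))) μ :=
  Integrable.of_bound (by fun_prop) 1 <| ae_of_all _ fun ω => by
    rw [norm_of_nonneg (exp_pos _).le]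
    exact exp_neg_exp_mul_le_one _ _

variable [IsProbabilityMeasure μ] {X : Ω → α} {g : α → ℝ} {t : Set α} {c : ℝ}

lemma integral_comp_le_measureReal_preimage_add (hX : Measurable X)
    (hg : Integrable (fun ω => g (X ω)) μ) (ht : MeasurableSet t)
    (h : ∀ y, g y ≤ t.indicator 1 y + c) :
    ∫ ω, g (X ω) ∂μ ≤ μ.real (X ⁻¹' t) + c := by
  have hind : Integrable ((X ⁻¹' t).indicator fun _ => (1 : ℝ)) μ :=
    (integrable_const 1).indicator (hX ht)
  calc ∫ ω, g (X ω) ∂μ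
      ≤ ∫ ω, ((X ⁻¹' t).indicator (fun _ => (1 : ℝ)) ω + c) ∂μ :=
        integral_mono hg (hind.add (integrable_const c)) fun ω => h (X ω)
    _ = μ.real (X ⁻¹' t) + c := by
        rw [integral_add hind (integrable_const c), integral_indicator_const _ (hX ht)]
        simp

lemma measureReal_preimage_le_integral_comp_add (hX : Measurable X)
    (hg : Integrable (fun ω => g (X ω)) μ) (ht : MeasurableSet t)
    (h : ∀ y, t.indicator 1 y ≤ g y + c) :
    μ.real (X ⁻¹' t) ≤ ∫ ω, g (X ω) ∂μ + c := by
  have hind : Integrable ((X ⁻¹' t).indicator fun _ => (1 : ℝ)) μ :=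
    (integrable_const 1).indicator (hX ht)
  calc μ.real (X ⁻¹' t)
      = ∫ ω, (X ⁻¹' t).indicator (fun _ => (1 : ℝ)) ω ∂μ := by
        rw [integral_indicator_const _ (hX ht)]
        simp
    _ ≤ ∫ ω, (g (X ω) + c) ∂μ :=
        integral_mono hind (hg.add (integrable_const c)) fun ω => h (X ω)
    _ = ∫ ω, g (X ω) ∂μ + c := by
        rw [integral_add hg (integrable_const c)]
        simp

end Integration

theorem cdf_comparison_general (M ε σ x : ℝ) (hM : 2 ≤ M)
    (hσ : 0 < σ)
    {Ω : Type} [MeasurableSpace Ω] (μ : Measure Ω) [IsProbabilityMeasure μ]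
    (X : Ω → ℝ) (hX : Measurable X) (F : ℝ → ℝ)
    (fM : ℝ → ℝ) (hfM : ∀ z : ℝ, fM z = Real.exp (-Real.exp (σ * M ^ ((1 : ℝ) / 3) * z)))
    (xm xp : ℝ)
    (hxm : xm = x - M ^ (-(1 : ℝ) / 3) * (Real.log M) ^ 2)
    (hxp : xp = x + M ^ (-(1 : ℝ) / 3) * (Real.log M) ^ 2)
    (h1 : |(∫ ω, fM (X ω - xm) ∂μ) - F xm| ≤ M ^ (-ε))
    (h2 : |(∫ ω, fM (X ω - xp) ∂μ) - F xp| ≤ M ^ (-ε)) :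
    (F xm - M ^ (-ε) - Real.exp (-Real.exp (σ * (Real.log M) ^ 2)) ≤
      (μ {ω | X ω ≤ x}).toReal) ∧
    (1 - F xp - M ^ (-ε) - (1 - Real.exp (-Real.exp (-σ * (Real.log M) ^ 2))) ≤
      1 - (μ {ω | X ω ≤ x}).toReal) ∧
    (Real.exp (-Real.exp (σ * (Real.log M) ^ 2)) ≤ M ^ (-ε) →
      1 - Real.exp (-Real.exp (-σ * (Real.log M) ^ 2)) ≤ M ^ (-ε) →
      F xm - 2 * M ^ (-ε) ≤ (μ {ω | X ω ≤ x}).toReal ∧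
      (μ {ω | X ω ≤ x}).toReal ≤ F xp + 2 * M ^ (-ε)) := by
  set δ := M ^ (-(1 : ℝ) / 3) * (Real.log M) ^ 2
  have ha : 0 ≤ σ * M ^ ((1 : ℝ) / 3) := by positivity
  have haδ : σ * M ^ ((1 : ℝ) / 3) * δ = σ * (Real.log M) ^ 2 := by
    rw [mul_assoc, ← mul_assoc (M ^ _), ← rpow_add (by linarith)]
    norm_num
  subst hxm hxp
  simp only [hfM] at h1 h2
  have lower := integral_comp_le_measureReal_preimage_add (μ := μ) hX
    (integrable_exp_neg_exp_mul_sub hX _ _) measurableSet_Iic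
    (exp_neg_exp_le_indicator_Iic_add ha x δ)
  have upper := measureReal_preimage_le_integral_comp_add (μ := μ) hX
    (integrable_exp_neg_exp_mul_sub hX _ _) measurableSet_Iic
    (indicator_Iic_le_exp_neg_exp_add ha x δ)
  rw [haδ] at lower
  rw [mul_neg, haδ, ← neg_mul] at upper
  have hG : (μ {ω | X ω ≤ x}).toReal = μ.real (X ⁻¹' Set.Iic x) := rfl
  rw [hG]
  obtain ⟨h1, -⟩ := abs_le.mp h1
  obtain ⟨-, h2⟩ := abs_le.mp h2
  exact ⟨by linarith, by linarith, fun _ _ => ⟨by linarith, by linarith⟩⟩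

/-- Laplace-transform-type comparison of distribution functions: if the expectations of
`f_M(X - x^±)` are within `M^{-ε}` of `F(x^±)`, then the CDF `G` of `X` at `x` is trapped
between `F(x^-) - 2M^{-ε}` and `F(x^+) + 2M^{-ε}` (under the stated provisos). -/
theorem cdf_comparison (M ε σ x : ℝ) (hM : 2 ≤ M) (hε : ε ∈ Set.Ioo (0 : ℝ) (1 / 3))
    (hσ : 0 < σ)
    {Ω : Type} [MeasurableSpace Ω] (μ : Measure Ω) [IsProbabilityMeasure μ]
    (X : Ω → ℝ) (hX : Measurable X) (F : ℝ → ℝ)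
    (fM : ℝ → ℝ) (hfM : ∀ z : ℝ, fM z = Real.exp (-Real.exp (σ * M ^ ((1 : ℝ) / 3) * z)))
    (xm xp : ℝ)
    (hxm : xm = x - M ^ (-(1 : ℝ) / 3) * (Real.log M) ^ 2)
    (hxp : xp = x + M ^ (-(1 : ℝ) / 3) * (Real.log M) ^ 2)
    (h1 : |(∫ ω, fM (X ω - xm) ∂μ) - F xm| ≤ M ^ (-ε))
    (h2 : |(∫ ω, fM (X ω - xp) ∂μ) - F xp| ≤ M ^ (-ε)) :
    (F xm - M ^ (-ε) - Real.exp (-Real.exp (σ * (Real.log M) ^ 2)) ≤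
      (μ {ω | X ω ≤ x}).toReal) ∧
    (1 - F xp - M ^ (-ε) - (1 - Real.exp (-Real.exp (-σ * (Real.log M) ^ 2))) ≤
      1 - (μ {ω | X ω ≤ x}).toReal) ∧
    (Real.exp (-Real.exp (σ * (Real.log M) ^ 2)) ≤ M ^ (-ε) →
      1 - Real.exp (-Real.exp (-σ * (Real.log M) ^ 2)) ≤ M ^ (-ε) →
      F xm - 2 * M ^ (-ε) ≤ (μ {ω | X ω ≤ x}).toReal ∧
      (μ {ω | X ω ≤ x}).toReal ≤ F xp + 2 * M ^ (-ε)) :=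
  cdf_comparison_general M ε σ x hM hσ μ X hX F fM hfM xm xp hxm hxp h1 h2
end
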